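/- Let n, m, r ∈ ℕ and let the family A = {A_1, …, A_m} of n×n matrices over F₂ be such that for every nonzero s ∈ {0,1}^m the matrix A_s = Σ_{i=1}^m s_i A_i has rank at least n − r. Then for all k1, k2 ∈ ℝ, the function deor_A is a (k1, k2, ε) X1-strong two-source extractor against classical knowledge in the Markov model with ε = 3 · 2^{−(k1 + k2 + 2 − n − r − m)/4}. -/

import Mathlib

open Matrix Kronecker BigOperators Finset ComplexOrder

/-- Bit strings of length `n`. -/
abbrev BS (n : ℕ) := Fin n → Bool

/-- Embedding of a bit into the field with two elements. -/
def toZ2 (b : Bool) : ZMod 2 := if b then 1 else 0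

/-- Inner product modulo 2 of two bit strings. -/
def ipBool {n : ℕ} (x y : BS n) : Bool := decide ((∑ i, toZ2 (x i) * toZ2 (y i)) = 1)

/-- Multiplication of a bit string by a matrix over F₂. -/
def mulVecBool {n : ℕ} (L : Matrix (Fin n) (Fin n) (ZMod 2)) (x : BS n) : BS n :=
  fun i => decide ((L.mulVec fun j => toZ2 (x j)) i = 1)

/-- The `deor` extractor associated to a family of matrices over F₂. -/
def deor {n m : ℕ} (A : Fin m → Matrix (Fin n) (Fin n) (ZMod 2)) (x y : BS n) : BS m :=
  fun i => ipBool (mulVecBool (A i) x) y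

/-- The square root of a positive semidefinite matrix (Mathlib's former `Matrix.PosSemidef.sqrt`). -/
noncomputable def Matrix.PosSemidef.sqrt {𝕜 : Type*} [RCLike 𝕜] {n : Type*} [Fintype n]
    [DecidableEq n] {A : Matrix n n 𝕜} (hA : A.PosSemidef) : Matrix n n 𝕜 :=
  hA.1.eigenvectorUnitary.1 * diagonal ((↑) ∘ (√·) ∘ hA.1.eigenvalues) *
    (star hA.1.eigenvectorUnitary : Matrix n n 𝕜)

/-- Trace norm of a complex matrix: `tr √(SᴴS)`. -/
noncomputable def traceNorm {B : Type*} [Fintype B] [DecidableEq B] (S : Matrix B B ℂ) : ℝ :=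
  ((Matrix.posSemidef_conjTranspose_mul_self S).sqrt.trace).re

/-- Trace distance between two matrices. -/
noncomputable def traceDist {B : Type*} [Fintype B] [DecidableEq B] (ρ σ : Matrix B B ℂ) : ℝ :=
  (1/2) * traceNorm (ρ - σ)

/-- A density matrix: positive semidefinite with unit trace. -/
def IsDensity {B : Type*} [Fintype B] (ρ : Matrix B B ℂ) : Prop :=
  ρ.PosSemidef ∧ ρ.trace = 1

/-- A cq-state given by its family of (subnormalized) conditional operators. -/
def IsCQ {X B : Type*} [Fintype X] [Fintype B] (ρ : X → Matrix B B ℂ) : Prop :=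
  (∀ x, (ρ x).PosSemidef) ∧ (∑ x, (ρ x).trace) = 1

/-- The full matrix `Σ_x |x⟩⟨x| ⊗ ρ_{B∧x}` of a cq-state. -/
noncomputable def cqMatrix {X B : Type*} [Fintype X] [DecidableEq X] [Fintype B]
    (ρ : X → Matrix B B ℂ) : Matrix (X × B) (X × B) ℂ :=
  ∑ x, (Matrix.single x x (1:ℂ)) ⊗ₖ ρ x

/-- Conditional min-entropy of a cq-state: the sup over density matrices σ and reals w with
`ρ_{B∧x} ≤ 2^{-w}·σ` for all `x` (Loewner order), of `w`; `⊥ = -∞` if no such pair exists. -/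
noncomputable def qCondHmin {X B : Type*} [Fintype X] [Fintype B]
    (ρ : X → Matrix B B ℂ) : EReal :=
  sSup {z : EReal | ∃ w : ℝ, z = (w : EReal) ∧ ∃ σ : Matrix B B ℂ, σ.PosSemidef ∧ σ.trace = 1 ∧
    ∀ x, (((2:ℝ) ^ (-w)) • σ - ρ x).PosSemidef}

/-- The maximally mixed state on `m` qubits. -/
noncomputable def mixed (m : ℕ) : Matrix (BS m) (BS m) ℂ := ((2:ℂ)^m)⁻¹ • 1

/-- A finitely supported probability distribution. -/
def IsDist {α : Type*} [Fintype α] (P : α → ℝ) : Prop := (∀ a, 0 ≤ P a) ∧ ∑ a, P a = 1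

/-- Total variation distance. -/
noncomputable def TV {α : Type*} [Fintype α] (Q R : α → ℝ) : ℝ := (1/2) * ∑ a, |Q a - R a|

/-- Min-entropy of a distribution. -/
noncomputable def Hmin {X : Type*} [Fintype X] [Nonempty X] (P : X → ℝ) : ℝ :=
  - Real.logb 2 (⨆ x, P x)

/-- Conditional min-entropy of a joint distribution. -/
noncomputable def HminCond {X Z : Type*} [Fintype X] [Nonempty X] [Fintype Z]
    (P : X → Z → ℝ) : ℝ :=
  - Real.logb 2 (∑ z, ⨆ x, P x z)

/-- `(k1,k2,ε)` X1-strong two-source extractor (no side information). -/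
def IsStrongExt (n1 n2 m : ℕ) (Ext : BS n1 → BS n2 → BS m) (k1 k2 ε : ℝ) : Prop :=
  ∀ (P1 : BS n1 → ℝ) (P2 : BS n2 → ℝ), IsDist P1 → IsDist P2 →
    k1 ≤ Hmin P1 → k2 ≤ Hmin P2 →
    TV (fun p : BS m × BS n1 => ∑ x2, if Ext p.2 x2 = p.1 then P1 p.2 * P2 x2 else 0)
       (fun p : BS m × BS n1 => ((2:ℝ)^m)⁻¹ * P1 p.2) ≤ ε

/-- `(k1,k2,ε)` X1-strong two-source extractor against classical product-type knowledge. -/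
def IsStrongExtCPT (n1 n2 m : ℕ) (Ext : BS n1 → BS n2 → BS m) (k1 k2 ε : ℝ) : Prop :=
  ∀ (Z1 Z2 : Type) [Fintype Z1] [Fintype Z2],
    ∀ (P1 : BS n1 → Z1 → ℝ) (P2 : BS n2 → Z2 → ℝ),
    IsDist (fun p : BS n1 × Z1 => P1 p.1 p.2) →
    IsDist (fun p : BS n2 × Z2 => P2 p.1 p.2) →
    k1 ≤ HminCond P1 → k2 ≤ HminCond P2 →
    TV (fun q : BS m × BS n1 × Z1 × Z2 =>
          ∑ x2, if Ext q.2.1 x2 = q.1 then P1 q.2.1 q.2.2.1 * P2 x2 q.2.2.2 else 0)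
       (fun q : BS m × BS n1 × Z1 × Z2 =>
          ((2:ℝ)^m)⁻¹ * P1 q.2.1 q.2.2.1 * ∑ x2, P2 x2 q.2.2.2) ≤ ε

/-- `(k1,k2,ε)` weak two-source extractor against classical product-type knowledge. -/
def IsWeakExtCPT (n1 n2 m : ℕ) (Ext : BS n1 → BS n2 → BS m) (k1 k2 ε : ℝ) : Prop :=
  ∀ (Z1 Z2 : Type) [Fintype Z1] [Fintype Z2],
    ∀ (P1 : BS n1 → Z1 → ℝ) (P2 : BS n2 → Z2 → ℝ),
    IsDist (fun p : BS n1 × Z1 => P1 p.1 p.2) →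
    IsDist (fun p : BS n2 × Z2 => P2 p.1 p.2) →
    k1 ≤ HminCond P1 → k2 ≤ HminCond P2 →
    TV (fun q : BS m × Z1 × Z2 =>
          ∑ x1, ∑ x2, if Ext x1 x2 = q.1 then P1 x1 q.2.1 * P2 x2 q.2.2 else 0)
       (fun q : BS m × Z1 × Z2 =>
          ((2:ℝ)^m)⁻¹ * (∑ x1, P1 x1 q.2.1) * ∑ x2, P2 x2 q.2.2) ≤ ε

/-- `(k1,k2,ε)` X1-strong two-source extractor against classical knowledge in the Markov model. -/
def IsStrongExtCMarkov (n1 n2 m : ℕ) (Ext : BS n1 → BS n2 → BS m) (k1 k2 ε : ℝ) : Prop :=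
  ∀ (C : Type) [Fintype C], ∀ (P : BS n1 → BS n2 → C → ℝ),
    IsDist (fun q : BS n1 × BS n2 × C => P q.1 q.2.1 q.2.2) →
    (∀ x1 x2 c, P x1 x2 c * (∑ x1', ∑ x2', P x1' x2' c)
        = (∑ x2', P x1 x2' c) * (∑ x1', P x1' x2 c)) →
    k1 ≤ HminCond (fun x1 c => ∑ x2, P x1 x2 c) →
    k2 ≤ HminCond (fun x2 c => ∑ x1, P x1 x2 c) →
    TV (fun q : BS m × BS n1 × C => ∑ x2, if Ext q.2.1 x2 = q.1 then P q.2.1 x2 q.2.2 else 0)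
       (fun q : BS m × BS n1 × C => ((2:ℝ)^m)⁻¹ * ∑ x2, P q.2.1 x2 q.2.2) ≤ ε

/-- The output cq-state `ρ_{Ext(X1,X2) X1 C1 C2}` for product-type quantum side information. -/
noncomputable def qStrongOut {n1 n2 m : ℕ} {C1 C2 : Type}
    [Fintype C1] [Fintype C2]
    (Ext : BS n1 → BS n2 → BS m)
    (ρ1 : BS n1 → Matrix C1 C1 ℂ) (ρ2 : BS n2 → Matrix C2 C2 ℂ) :
    Matrix (BS m × (BS n1 × C1) × C2) (BS m × (BS n1 × C1) × C2) ℂ :=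
  ∑ x1, ∑ x2, (Matrix.single (Ext x1 x2) (Ext x1 x2) (1:ℂ)) ⊗ₖ
    (((Matrix.single x1 x1 (1:ℂ)) ⊗ₖ ρ1 x1) ⊗ₖ ρ2 x2)

/-- `(k1,k2,ε)` X1-strong two-source extractor against quantum product-type knowledge. -/
def IsStrongExtQPT (n1 n2 m : ℕ) (Ext : BS n1 → BS n2 → BS m) (k1 k2 ε : ℝ) : Prop :=
  ∀ (C1 C2 : Type) [Fintype C1] [DecidableEq C1] [Fintype C2] [DecidableEq C2],
    ∀ (ρ1 : BS n1 → Matrix C1 C1 ℂ) (ρ2 : BS n2 → Matrix C2 C2 ℂ),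
    IsCQ ρ1 → IsCQ ρ2 →
    (k1 : EReal) ≤ qCondHmin ρ1 → (k2 : EReal) ≤ qCondHmin ρ2 →
    traceDist (qStrongOut Ext ρ1 ρ2) (mixed m ⊗ₖ (cqMatrix ρ1 ⊗ₖ ∑ x2, ρ2 x2)) ≤ ε

/-- `(k1,k2,ε)` weak two-source extractor against quantum product-type knowledge. -/
def IsWeakExtQPT (n1 n2 m : ℕ) (Ext : BS n1 → BS n2 → BS m) (k1 k2 ε : ℝ) : Prop :=
  ∀ (C1 C2 : Type) [Fintype C1] [DecidableEq C1] [Fintype C2] [DecidableEq C2],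
    ∀ (ρ1 : BS n1 → Matrix C1 C1 ℂ) (ρ2 : BS n2 → Matrix C2 C2 ℂ),
    IsCQ ρ1 → IsCQ ρ2 →
    (k1 : EReal) ≤ qCondHmin ρ1 → (k2 : EReal) ≤ qCondHmin ρ2 →
    traceDist (∑ x1, ∑ x2, (Matrix.single (Ext x1 x2) (Ext x1 x2) (1:ℂ)) ⊗ₖ
        ((ρ1 x1) ⊗ₖ ρ2 x2))
      (mixed m ⊗ₖ ((∑ x1, ρ1 x1) ⊗ₖ ∑ x2, ρ2 x2)) ≤ ε

/-- `(k1,k2,ε)` X1-strong two-source extractor against quantum knowledge in the Markov model,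
in decomposed form. -/
def IsStrongExtQMarkov (n1 n2 m : ℕ) (Ext : BS n1 → BS n2 → BS m) (k1 k2 ε : ℝ) : Prop :=
  ∀ (Z C1 C2 : Type) [Fintype Z] [DecidableEq Z]
      [Fintype C1] [DecidableEq C1] [Fintype C2] [DecidableEq C2],
    ∀ (P : Z → ℝ) (ρ1 : Z → BS n1 → Matrix C1 C1 ℂ) (ρ2 : Z → BS n2 → Matrix C2 C2 ℂ),
    IsDist P → (∀ z, IsCQ (ρ1 z)) → (∀ z, IsCQ (ρ2 z)) →
    (k1 : EReal) ≤ qCondHmin (fun x1 : BS n1 =>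
      ∑ z, P z • (((ρ1 z x1) ⊗ₖ ∑ x2, ρ2 z x2) ⊗ₖ Matrix.single z z (1:ℂ))) →
    (k2 : EReal) ≤ qCondHmin (fun x2 : BS n2 =>
      ∑ z, P z • (((∑ x1, ρ1 z x1) ⊗ₖ ρ2 z x2) ⊗ₖ Matrix.single z z (1:ℂ))) →
    traceDist
      (∑ x1, ∑ x2, ∑ z, P z •
        ((Matrix.single (Ext x1 x2) (Ext x1 x2) (1:ℂ)) ⊗ₖ
          ((Matrix.single x1 x1 (1:ℂ)) ⊗ₖ
            (((ρ1 z x1) ⊗ₖ ρ2 z x2) ⊗ₖ Matrix.single z z (1:ℂ)))))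
      (mixed m ⊗ₖ cqMatrix (fun x1 : BS n1 =>
        ∑ z, P z • (((ρ1 z x1) ⊗ₖ ∑ x2, ρ2 z x2) ⊗ₖ Matrix.single z z (1:ℂ))))
      ≤ ε

/-!
Conditioned on each value `c` of the side information the two sources are independent, so it
suffices to treat product sources `p₁ ⊗ p₂`. For fixed `x₁`, the Walsh coefficient at `u ≠ 0` of
the distribution of `deor A x₁ X₂` is the coefficient of `p₂` at `A_u x₁`. Cauchy–Schwarz and
Parseval bound the ℓ¹-distance from uniform by these coefficients, and since `x₁ ↦ A_u x₁` is at
most `2^r`-to-one, Parseval for `p₂` yields the collision bound `√(2^(n+r+m) ‖p₁‖₂² ‖p₂‖₂²)`.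
With `‖pᵢ‖₂² ≤ max pᵢ · Σ pᵢ`, Cauchy–Schwarz over `c` and `Σ_c max_x P(x, c) ≤ 2^(-k)` bound the
total variation distance by `2^(-2t)`, `t = (k₁ + k₂ + 2 - n - r - m)/4`; as it is also at most
`1`, it is at most `2^(-t)`.
-/

section Walsh

variable {k : ℕ}

noncomputable def walshChar (u : Fin k → ZMod 2) : AddChar (Fin k → ZMod 2) ℝ :=
  (AddChar.zmodChar 2 (by norm_num : (-1 : ℝ) ^ 2 = 1)).compAddMonoidHom
    (AddMonoidHom.mk' (u ⬝ᵥ ·) (dotProduct_add u))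

lemma walshChar_apply (u v : Fin k → ZMod 2) : walshChar u v = (-1) ^ (u ⬝ᵥ v).val := rfl

lemma walshChar_comm (u v : Fin k → ZMod 2) : walshChar u v = walshChar v u := by
  rw [walshChar_apply, walshChar_apply, dotProduct_comm]

lemma walshChar_eq_zero_iff {u : Fin k → ZMod 2} : walshChar u = 0 ↔ u = 0 := by
  refine ⟨fun h => funext fun i => ?_, fun h => ?_⟩
  · have hi := AddChar.eq_zero_iff.mp h (Pi.single i 1)
    rw [walshChar_apply, dotProduct_single, mul_one,
      neg_one_pow_eq_one_iff_even (by norm_num)] at hi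
    obtain ⟨j, hj⟩ := hi
    have := ZMod.val_lt (u i)
    rw [Pi.zero_apply, ← ZMod.val_eq_zero]
    omega
  · ext v
    simp [walshChar_apply, h]

lemma sum_walshChar (u : Fin k → ZMod 2) :
    ∑ v, walshChar u v = if u = 0 then (2 : ℝ) ^ k else 0 := by
  rw [AddChar.sum_eq_ite]
  simp [walshChar_eq_zero_iff]

noncomputable def walshTransform (f : (Fin k → ZMod 2) → ℝ) (u : Fin k → ZMod 2) : ℝ :=
  ∑ v, walshChar u v * f v

lemma walshTransform_zero (f : (Fin k → ZMod 2) → ℝ) : walshTransform f 0 = ∑ v, f v := by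
  simp [walshTransform, walshChar_eq_zero_iff.mpr]

lemma sum_walshChar_mul_walshChar (v w : Fin k → ZMod 2) :
    ∑ u, walshChar u v * walshChar u w = if v = w then (2 : ℝ) ^ k else 0 := by
  simp_rw [← AddChar.map_add_eq_mul, walshChar_comm _ (v + w), sum_walshChar,
    add_eq_zero_iff_eq_neg, show -w = w from funext fun i => ZMod.neg_eq_self_mod_two (w i)]

lemma sum_walshTransform_sq (f : (Fin k → ZMod 2) → ℝ) :
    ∑ u, walshTransform f u ^ 2 = 2 ^ k * ∑ v, f v ^ 2 := by
  calc ∑ u, walshTransform f u ^ 2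
      = ∑ v, ∑ w, f v * f w * ∑ u, walshChar u v * walshChar u w := by
        simp_rw [walshTransform, sq, sum_mul_sum, mul_sum]
        rw [sum_comm]
        refine sum_congr rfl fun v _ => ?_
        rw [sum_comm]
        refine sum_congr rfl fun w _ => sum_congr rfl fun u _ => by ring
    _ = 2 ^ k * ∑ v, f v ^ 2 := by
        simp [sum_walshChar_mul_walshChar, mul_sum, sq, mul_comm]

lemma sum_sq_sub_mean_eq (f : (Fin k → ZMod 2) → ℝ) :
    ∑ v, (f v - (2 ^ k)⁻¹ * ∑ w, f w) ^ 2
      = (2 ^ k)⁻¹ * ∑ u ∈ univ.erase 0, walshTransform f u ^ 2 := by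
  have hparseval := sum_walshTransform_sq f
  rw [← sum_erase_add _ _ (mem_univ 0), walshTransform_zero] at hparseval
  rw [eq_sub_of_add_eq hparseval]
  simp only [sub_sq, sum_add_distrib, sum_sub_distrib, ← sum_mul, ← mul_sum, sum_const,
    card_univ, Fintype.card_fun, ZMod.card, Fintype.card_fin, nsmul_eq_mul]
  field_simp
  push_cast
  ring

lemma sum_abs_sub_mean_le (f : (Fin k → ZMod 2) → ℝ) :
    ∑ v, |f v - (2 ^ k)⁻¹ * ∑ w, f w|
      ≤ √(∑ u ∈ univ.erase 0, walshTransform f u ^ 2) := by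
  refine Real.le_sqrt_of_sq_le ?_
  calc (∑ v, |f v - (2 ^ k)⁻¹ * ∑ w, f w|) ^ 2
      ≤ 2 ^ k * ∑ v, (f v - (2 ^ k)⁻¹ * ∑ w, f w) ^ 2 := by
        simpa using sq_sum_le_card_mul_sum_sq (s := univ)
          (f := fun v => |f v - (2 ^ k)⁻¹ * ∑ w, f w|)
    _ = ∑ u ∈ univ.erase 0, walshTransform f u ^ 2 := by
        rw [sum_sq_sub_mean_eq, ← mul_assoc, mul_inv_cancel₀ (by positivity), one_mul]

end Walsh

section Counting

variable {K : Type*} [Field K] [Fintype K] [DecidableEq K] {ι ι' : Type*}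
  [Fintype ι] [DecidableEq ι] [Fintype ι']

lemma card_filter_mulVec_eq_zero (B : Matrix ι' ι K) :
    #{x | B *ᵥ x = 0} = Fintype.card K ^ (Fintype.card ι - B.rank) := by
  have hker : Module.finrank K (LinearMap.ker B.mulVecLin) = Fintype.card ι - B.rank := by
    have := LinearMap.finrank_range_add_finrank_ker B.mulVecLin
    rw [Module.finrank_fintype_fun_eq_card] at this
    rw [Matrix.rank]
    omega
  have hkerEquiv : {x // B *ᵥ x = 0} ≃ LinearMap.ker B.mulVecLin :=
    Equiv.subtypeEquivRight fun x => by simp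
  rw [← Fintype.card_subtype, ← Nat.card_eq_fintype_card, Nat.card_congr hkerEquiv,
    Module.natCard_eq_pow_finrank (K := K), Nat.card_eq_fintype_card, hker]

lemma card_filter_mulVec_eq_le (B : Matrix ι' ι K) (y : ι' → K) :
    #{x | B *ᵥ x = y} ≤ Fintype.card K ^ (Fintype.card ι - B.rank) := by
  rw [← card_filter_mulVec_eq_zero]
  by_cases hy : y ∈ Set.range B.mulVecLin
  · exact (AddMonoidHom.card_fiber_eq_of_mem_range B.mulVecLin hy ⟨0, map_zero _⟩).le
  · have : ∀ x, B *ᵥ x ≠ y := fun x hx => hy ⟨x, hx⟩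
    simp [this]

lemma sum_comp_mulVec_le [DecidableEq ι'] (B : Matrix ι' ι K) {h : (ι' → K) → ℝ}
    (hh : ∀ y, 0 ≤ h y) :
    ∑ x, h (B *ᵥ x) ≤ Fintype.card K ^ (Fintype.card ι - B.rank) * ∑ y, h y := by
  rw [← sum_fiberwise univ (B *ᵥ ·), mul_sum]
  refine sum_le_sum fun y _ => ?_
  rw [sum_congr rfl fun x hx => by rw [(mem_filter.mp hx).2], sum_const, nsmul_eq_mul]
  exact mul_le_mul_of_nonneg_right (by exact_mod_cast card_filter_mulVec_eq_le B y) (hh y)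

end Counting

section Pushforward

variable {α β : Type*} [Fintype α] [DecidableEq β]

noncomputable def pushforward (g : α → β) (p : α → ℝ) (b : β) : ℝ :=
  ∑ a, if g a = b then p a else 0

lemma sum_pushforward [Fintype β] (g : α → β) (p : α → ℝ) :
    ∑ b, pushforward g p b = ∑ a, p a := by
  simp only [pushforward]
  rw [sum_comm]
  simp

lemma pushforward_nonneg (g : α → β) {p : α → ℝ} (hp : ∀ a, 0 ≤ p a) (b : β) :
    0 ≤ pushforward g p b :=
  sum_nonneg fun a _ => by split_ifs <;> simp [hp a]

end Pushforward

section StrongDeviation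

variable {X1 X2 Y : Type*} [Fintype X1] [Fintype X2] [Fintype Y] [DecidableEq Y]

/-- Twice the total variation distance of `(Ext X₁ X₂, X₁)` from `U × X₁` when `(X₁, X₂)` is
distributed according to `P`. -/
noncomputable def strongDeviation (Ext : X1 → X2 → Y) (P : X1 → X2 → ℝ) : ℝ :=
  ∑ x1, ∑ y, |pushforward (Ext x1) (P x1) y - (Fintype.card Y : ℝ)⁻¹ * ∑ x2, P x1 x2|

lemma strongDeviation_le_two_mul_sum [Nonempty Y] (Ext : X1 → X2 → Y) {P : X1 → X2 → ℝ}
    (hP : ∀ x1 x2, 0 ≤ P x1 x2) : strongDeviation Ext P ≤ 2 * ∑ x1, ∑ x2, P x1 x2 := by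
  rw [strongDeviation, mul_sum]
  refine sum_le_sum fun x1 _ => ?_
  calc ∑ y, |pushforward (Ext x1) (P x1) y - (Fintype.card Y : ℝ)⁻¹ * ∑ x2, P x1 x2|
      ≤ ∑ y, (pushforward (Ext x1) (P x1) y + (Fintype.card Y : ℝ)⁻¹ * ∑ x2, P x1 x2) := by
        refine sum_le_sum fun y _ => (abs_sub _ _).trans_eq ?_
        rw [abs_of_nonneg (pushforward_nonneg _ (hP x1) y),
          abs_of_nonneg (mul_nonneg (by positivity) (sum_nonneg fun x2 _ => hP x1 x2))]
    _ = 2 * ∑ x2, P x1 x2 := by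
        rw [sum_add_distrib, sum_pushforward, sum_const, card_univ, nsmul_eq_mul, ← mul_assoc,
          mul_inv_cancel₀ (by exact_mod_cast Fintype.card_ne_zero), one_mul, two_mul]

lemma strongDeviation_const_mul (Ext : X1 → X2 → Y) (P : X1 → X2 → ℝ) (a : ℝ) :
    strongDeviation Ext (fun x1 x2 => a * P x1 x2) = |a| * strongDeviation Ext P := by
  simp only [strongDeviation, pushforward, mul_sum]
  refine sum_congr rfl fun x1 _ => sum_congr rfl fun y _ => ?_
  rw [← abs_mul, mul_sub, mul_sum, mul_sum]
  simp only [mul_ite, mul_zero]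
  ring_nf

lemma strongDeviation_mul (Ext : X1 → X2 → Y) {p1 : X1 → ℝ} (hp1 : ∀ x1, 0 ≤ p1 x1)
    (p2 : X2 → ℝ) :
    strongDeviation Ext (fun x1 x2 => p1 x1 * p2 x2)
      = ∑ x1, p1 x1 * ∑ y, |pushforward (Ext x1) p2 y - (Fintype.card Y : ℝ)⁻¹ * ∑ x2, p2 x2| := by
  simp only [strongDeviation, pushforward, mul_sum]
  refine sum_congr rfl fun x1 _ => sum_congr rfl fun y _ => ?_
  rw [← abs_of_nonneg (hp1 x1), ← abs_mul, abs_of_nonneg (hp1 x1), mul_sub, mul_sum, mul_sum]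
  simp only [mul_ite, mul_zero]
  ring_nf

lemma strongDeviation_equiv {X1' X2' Y' : Type*} [Fintype X1'] [Fintype X2'] [Fintype Y']
    [DecidableEq Y'] (e1 : X1 ≃ X1') (e2 : X2 ≃ X2') (eY : Y ≃ Y') {Ext : X1 → X2 → Y}
    {Ext' : X1' → X2' → Y'} (hExt : ∀ x1 x2, eY (Ext x1 x2) = Ext' (e1 x1) (e2 x2))
    (P : X1 → X2 → ℝ) :
    strongDeviation Ext' (fun x1' x2' => P (e1.symm x1') (e2.symm x2'))
      = strongDeviation Ext P := by
  simp only [strongDeviation, pushforward, Fintype.card_congr eY.symm]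
  rw [← e1.sum_comp]
  refine sum_congr rfl fun x1 _ => ?_
  rw [← eY.sum_comp]
  refine sum_congr rfl fun y _ => ?_
  simp only [← e2.sum_comp, ← hExt, eY.injective.eq_iff, Equiv.symm_apply_apply]

end StrongDeviation

lemma TV_eq_half_sum_strongDeviation {m : ℕ} {X1 X2 C : Type*} [Fintype X1] [Fintype X2]
    [Fintype C] (Ext : X1 → X2 → BS m) (P : X1 → X2 → C → ℝ) :
    TV (fun q : BS m × X1 × C => ∑ x2, if Ext q.2.1 x2 = q.1 then P q.2.1 x2 q.2.2 else 0)
       (fun q : BS m × X1 × C => ((2:ℝ)^m)⁻¹ * ∑ x2, P q.2.1 x2 q.2.2)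
      = 1 / 2 * ∑ c, strongDeviation Ext (fun x1 x2 => P x1 x2 c) := by
  simp only [TV, strongDeviation, pushforward, Fintype.sum_prod_type, Fintype.card_fun,
    Fintype.card_bool, Fintype.card_fin, Nat.cast_pow, Nat.cast_ofNat]
  congr 1
  rw [sum_comm]
  exact (sum_congr rfl fun _ _ => sum_comm).trans sum_comm

lemma sum_sq_le_iSup_mul_sum {α : Type*} [Fintype α] {p : α → ℝ} (hp : ∀ a, 0 ≤ p a) :
    ∑ a, p a ^ 2 ≤ (⨆ a, p a) * ∑ a, p a := by
  rw [mul_sum]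
  exact sum_le_sum fun a _ => by
    rw [sq]
    exact mul_le_mul_of_nonneg_right (le_ciSup (Set.finite_range p).bddAbove a) (hp a)

lemma strongDeviation_le_of_condIndep {X1 X2 Y : Type*} [Fintype X1] [Fintype X2] [Fintype Y]
    [DecidableEq Y] [Nonempty Y] {Ext : X1 → X2 → Y} {K : ℝ} (hK : 0 ≤ K)
    (hExt : ∀ (p1 : X1 → ℝ) (p2 : X2 → ℝ), (∀ x1, 0 ≤ p1 x1) →
      strongDeviation Ext (fun x1 x2 => p1 x1 * p2 x2)
        ≤ √(K * (∑ x1, p1 x1 ^ 2) * ∑ x2, p2 x2 ^ 2))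
    {P : X1 → X2 → ℝ} (hP : ∀ x1 x2, 0 ≤ P x1 x2)
    (hindep : ∀ x1 x2, P x1 x2 * (∑ x1', ∑ x2', P x1' x2')
      = (∑ x2', P x1 x2') * (∑ x1', P x1' x2)) :
    strongDeviation Ext P ≤ √(K * (⨆ x1, ∑ x2, P x1 x2) * ⨆ x2, ∑ x1, P x1 x2) := by
  set W := ∑ x1, ∑ x2, P x1 x2
  set p1 := fun x1 => ∑ x2, P x1 x2
  set p2 := fun x2 => ∑ x1, P x1 x2
  have hp1 : ∀ x1, 0 ≤ p1 x1 := fun x1 => sum_nonneg fun x2 _ => hP x1 x2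
  have hp2 : ∀ x2, 0 ≤ p2 x2 := fun x2 => sum_nonneg fun x1 _ => hP x1 x2
  have hW1 : ∑ x1, p1 x1 = W := rfl
  have hW2 : ∑ x2, p2 x2 = W := sum_comm
  have hW0 : 0 ≤ W := sum_nonneg fun x1 _ => hp1 x1
  rcases hW0.eq_or_lt with hW | hW
  · calc strongDeviation Ext P ≤ 2 * W := strongDeviation_le_two_mul_sum Ext hP
      _ = 0 := by rw [← hW, mul_zero]
      _ ≤ _ := Real.sqrt_nonneg _
  refine le_of_mul_le_mul_left ?_ hW
  -- by `hindep`, scaling `P` by its mass `W` reduces to product sources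
  calc W * strongDeviation Ext P
      = strongDeviation Ext (fun x1 x2 => p1 x1 * p2 x2) := by
        rw [← abs_of_pos hW, ← strongDeviation_const_mul]
        simp_rw [mul_comm W, hindep]
        rfl
    _ ≤ √(K * (∑ x1, p1 x1 ^ 2) * ∑ x2, p2 x2 ^ 2) := hExt p1 p2 hp1
    _ ≤ √(K * ((⨆ x1, p1 x1) * W) * ((⨆ x2, p2 x2) * W)) := by
        refine Real.sqrt_le_sqrt (mul_le_mul (mul_le_mul_of_nonneg_left ?_ hK) ?_
          (sum_nonneg fun x2 _ => sq_nonneg _) (mul_nonneg hK (mul_nonneg ?_ hW0)))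
        · exact hW1 ▸ sum_sq_le_iSup_mul_sum hp1
        · exact hW2 ▸ sum_sq_le_iSup_mul_sum hp2
        · exact Real.iSup_nonneg hp1
    _ = W * √(K * (⨆ x1, p1 x1) * ⨆ x2, p2 x2) := by
        rw [show K * ((⨆ x1, p1 x1) * W) * ((⨆ x2, p2 x2) * W)
            = W ^ 2 * (K * (⨆ x1, p1 x1) * ⨆ x2, p2 x2) by ring,
          Real.sqrt_mul (sq_nonneg W), Real.sqrt_sq hW.le]

lemma sum_iSup_le_of_le_HminCond {X Z : Type*} [Fintype X] [Nonempty X] [Fintype Z]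
    {P : X → Z → ℝ} (hP : ∑ x, ∑ z, P x z = 1) {k : ℝ} (hk : k ≤ HminCond P) :
    ∑ z, ⨆ x, P x z ≤ 2 ^ (-k) := by
  have hpos : 0 < ∑ z, ⨆ x, P x z := by
    have : (1 : ℝ) ≤ Fintype.card X * ∑ z, ⨆ x, P x z := by
      calc (1 : ℝ) = ∑ x, ∑ z, P x z := hP.symm
        _ ≤ ∑ _x : X, ∑ z, ⨆ x, P x z :=
          sum_le_sum fun x _ => sum_le_sum fun z _ =>
            le_ciSup (Set.finite_range (P · z)).bddAbove x
        _ = _ := by rw [sum_const, card_univ, nsmul_eq_mul]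
    exact pos_of_mul_pos_right (one_pos.trans_le this) (Nat.cast_nonneg _)
  rw [HminCond] at hk
  exact (Real.logb_le_iff_le_rpow one_lt_two hpos).mp (by linarith)

lemma sum_sqrt_mul_mul_le {ι : Type*} (s : Finset ι) {K : ℝ} (hK : 0 ≤ K) {a b : ι → ℝ}
    (ha : ∀ i, 0 ≤ a i) (hb : ∀ i, 0 ≤ b i) :
    ∑ i ∈ s, √(K * a i * b i) ≤ √(K * (∑ i ∈ s, a i) * ∑ i ∈ s, b i) := by
  have hsplit : ∀ {x y : ℝ}, 0 ≤ x → √(K * x * y) = √K * (√x * √y) := fun hx => by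
    rw [Real.sqrt_mul (mul_nonneg hK hx), Real.sqrt_mul hK, mul_assoc]
  rw [hsplit (sum_nonneg fun i _ => ha i)]
  simp_rw [hsplit (ha _), ← mul_sum]
  exact mul_le_mul_of_nonneg_left (Real.sum_sqrt_mul_sqrt_le s ha hb) (Real.sqrt_nonneg K)

lemma le_of_le_one_of_le_sq {x a : ℝ} (ha : 0 ≤ a) (h1 : x ≤ 1) (h2 : x ≤ a ^ 2) : x ≤ a := by
  rcases le_total a 1 with h | h
  · nlinarith
  · linarith

section Markov

variable {X1 X2 C : Type*} [Fintype X1] [Fintype X2] [Fintype C] {P : X1 → X2 → C → ℝ}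

lemma IsDist.sum_sum_sum_eq_one (hP : IsDist fun q : X1 × X2 × C => P q.1 q.2.1 q.2.2) :
    ∑ x1, ∑ x2, ∑ c, P x1 x2 c = 1 := by
  simpa only [Fintype.sum_prod_type] using hP.2

lemma sum_strongDeviation_le_two {Y : Type*} [Fintype Y] [DecidableEq Y] [Nonempty Y]
    (Ext : X1 → X2 → Y) (hP : IsDist fun q : X1 × X2 × C => P q.1 q.2.1 q.2.2) :
    ∑ c, strongDeviation Ext (fun x1 x2 => P x1 x2 c) ≤ 2 := by
  calc ∑ c, strongDeviation Ext (fun x1 x2 => P x1 x2 c)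
      ≤ ∑ c, 2 * ∑ x1, ∑ x2, P x1 x2 c :=
        sum_le_sum fun c _ => strongDeviation_le_two_mul_sum Ext fun x1 x2 => hP.1 (x1, x2, c)
    _ = 2 * ∑ x1, ∑ x2, ∑ c, P x1 x2 c := by
        rw [← mul_sum, sum_comm]
        exact congrArg (2 * ·) (sum_congr rfl fun _ _ => by rw [sum_comm])
    _ = 2 := by rw [hP.sum_sum_sum_eq_one, mul_one]

lemma sum_strongDeviation_le_of_condIndep [Nonempty X1] [Nonempty X2] {Y : Type*} [Fintype Y]
    [DecidableEq Y] [Nonempty Y] {Ext : X1 → X2 → Y} {K : ℝ} (hK : 0 ≤ K)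
    (hExt : ∀ (p1 : X1 → ℝ) (p2 : X2 → ℝ), (∀ x1, 0 ≤ p1 x1) →
      strongDeviation Ext (fun x1 x2 => p1 x1 * p2 x2)
        ≤ √(K * (∑ x1, p1 x1 ^ 2) * ∑ x2, p2 x2 ^ 2))
    (hP : IsDist fun q : X1 × X2 × C => P q.1 q.2.1 q.2.2)
    (hindep : ∀ x1 x2 c, P x1 x2 c * (∑ x1', ∑ x2', P x1' x2' c)
      = (∑ x2', P x1 x2' c) * (∑ x1', P x1' x2 c))
    {k1 k2 : ℝ} (hk1 : k1 ≤ HminCond fun x1 c => ∑ x2, P x1 x2 c)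
    (hk2 : k2 ≤ HminCond fun x2 c => ∑ x1, P x1 x2 c) :
    ∑ c, strongDeviation Ext (fun x1 x2 => P x1 x2 c) ≤ √(K * 2 ^ (-k1) * 2 ^ (-k2)) := by
  have hPnn : ∀ x1 x2 c, 0 ≤ P x1 x2 c := fun x1 x2 c => hP.1 (x1, x2, c)
  have hmass := hP.sum_sum_sum_eq_one
  have hM1 : ∑ c, ⨆ x1, ∑ x2, P x1 x2 c ≤ 2 ^ (-k1) := by
    refine sum_iSup_le_of_le_HminCond ?_ hk1
    rw [← hmass]
    exact sum_congr rfl fun _ _ => by rw [sum_comm]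
  have hM2 : ∑ c, ⨆ x2, ∑ x1, P x1 x2 c ≤ 2 ^ (-k2) := by
    refine sum_iSup_le_of_le_HminCond ?_ hk2
    rw [← hmass, eq_comm, sum_comm]
    exact sum_congr rfl fun _ _ => by rw [sum_comm]
  have hM1nn : ∀ c, 0 ≤ ⨆ x1, ∑ x2, P x1 x2 c := fun c =>
    Real.iSup_nonneg fun x1 => sum_nonneg fun x2 _ => hPnn x1 x2 c
  have hM2nn : ∀ c, 0 ≤ ⨆ x2, ∑ x1, P x1 x2 c := fun c =>
    Real.iSup_nonneg fun x2 => sum_nonneg fun x1 _ => hPnn x1 x2 c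
  calc ∑ c, strongDeviation Ext (fun x1 x2 => P x1 x2 c)
      ≤ ∑ c, √(K * (⨆ x1, ∑ x2, P x1 x2 c) * ⨆ x2, ∑ x1, P x1 x2 c) :=
        sum_le_sum fun c _ =>
          strongDeviation_le_of_condIndep hK hExt (hPnn · · c) (hindep · · c)
    _ ≤ √(K * 2 ^ (-k1) * 2 ^ (-k2)) :=
        (sum_sqrt_mul_mul_le _ hK hM1nn hM2nn).trans <| Real.sqrt_le_sqrt <|
          mul_le_mul (mul_le_mul_of_nonneg_left hM1 hK) hM2 (sum_nonneg fun c _ => hM2nn c)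
            (by positivity)

end Markov

theorem isStrongExtCMarkov_of_strongDeviation_mul_le {n1 n2 m N : ℕ}
    {Ext : BS n1 → BS n2 → BS m}
    (hExt : ∀ (p1 : BS n1 → ℝ) (p2 : BS n2 → ℝ), (∀ x1, 0 ≤ p1 x1) →
      strongDeviation Ext (fun x1 x2 => p1 x1 * p2 x2)
        ≤ √(2 ^ N * (∑ x1, p1 x1 ^ 2) * ∑ x2, p2 x2 ^ 2))
    (k1 k2 : ℝ) :
    IsStrongExtCMarkov n1 n2 m Ext k1 k2 (2 ^ (-(k1 + k2 + 2 - N) / 4)) := by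
  intro C _ P hP hindep hk1 hk2
  rw [TV_eq_half_sum_strongDeviation]
  refine le_of_le_one_of_le_sq (by positivity) ?_ ?_
  · linarith [sum_strongDeviation_le_two Ext hP]
  · calc 1 / 2 * ∑ c, strongDeviation Ext (fun x1 x2 => P x1 x2 c)
        ≤ 1 / 2 * √(2 ^ N * 2 ^ (-k1) * 2 ^ (-k2)) := by
          gcongr
          exact sum_strongDeviation_le_of_condIndep (by positivity) hExt hP hindep hk1 hk2
      _ = (2 ^ (-(k1 + k2 + 2 - N) / 4)) ^ 2 := by
          rw [← Real.rpow_natCast, ← Real.rpow_natCast _ 2, ← Real.rpow_mul zero_le_two,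
            ← Real.rpow_add two_pos, ← Real.rpow_add two_pos, Real.sqrt_eq_rpow,
            ← Real.rpow_mul zero_le_two, one_div, ← Real.rpow_neg_one, ← Real.rpow_add two_pos]
          congr 1
          ring

lemma sum_smul_mulVec_dotProduct {R ι ι' κ : Type*} [CommSemiring R] [Fintype ι] [Fintype ι']
    [Fintype κ] (A : κ → Matrix ι' ι R) (u : κ → R) (x : ι → R) (y : ι' → R) :
    (∑ i, u i • A i) *ᵥ x ⬝ᵥ y = u ⬝ᵥ fun i => A i *ᵥ x ⬝ᵥ y := by
  simp only [sum_mulVec, smul_mulVec, dotProduct, Finset.sum_apply, Pi.smul_apply, smul_eq_mul,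
    sum_mul, mul_sum, mul_assoc]
  exact sum_comm

lemma walshTransform_pushforward {α : Type*} [Fintype α] {k : ℕ} (g : α → (Fin k → ZMod 2))
    (p : α → ℝ) (u : Fin k → ZMod 2) :
    walshTransform (pushforward g p) u = ∑ a, walshChar u (g a) * p a := by
  simp only [walshTransform, pushforward, mul_sum, mul_ite, mul_zero]
  rw [sum_comm]
  simp

lemma sum_walshTransform_mulVec_sq_le {k n r : ℕ} (B : Matrix (Fin k) (Fin n) (ZMod 2))
    (hB : n - r ≤ B.rank) (p : (Fin k → ZMod 2) → ℝ) :
    ∑ x, walshTransform p (B *ᵥ x) ^ 2 ≤ 2 ^ (r + k) * ∑ y, p y ^ 2 := by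
  calc ∑ x, walshTransform p (B *ᵥ x) ^ 2
      ≤ 2 ^ (n - B.rank) * ∑ y, walshTransform p y ^ 2 := by
        simpa using sum_comp_mulVec_le B fun y => sq_nonneg (walshTransform p y)
    _ ≤ 2 ^ r * (2 ^ k * ∑ y, p y ^ 2) := by
        rw [sum_walshTransform_sq]
        gcongr
        · norm_num
        · omega
    _ = 2 ^ (r + k) * ∑ y, p y ^ 2 := by ring

def deorVec {n m : ℕ} (A : Fin m → Matrix (Fin n) (Fin n) (ZMod 2)) (x y : Fin n → ZMod 2) :
    Fin m → ZMod 2 :=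
  fun i => A i *ᵥ x ⬝ᵥ y

theorem strongDeviation_deorVec_mul_le {n m r : ℕ}
    (A : Fin m → Matrix (Fin n) (Fin n) (ZMod 2))
    (hA : ∀ u : Fin m → ZMod 2, u ≠ 0 → n - r ≤ (∑ i, u i • A i).rank)
    {p1 : (Fin n → ZMod 2) → ℝ} (hp1 : ∀ x, 0 ≤ p1 x) (p2 : (Fin n → ZMod 2) → ℝ) :
    strongDeviation (deorVec A) (fun x1 x2 => p1 x1 * p2 x2)
      ≤ √(2 ^ (n + r + m) * (∑ x, p1 x ^ 2) * ∑ y, p2 y ^ 2) := by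
  set S : (Fin n → ZMod 2) → ℝ :=
    fun x1 => ∑ u ∈ univ.erase 0, walshTransform (pushforward (deorVec A x1) p2) u ^ 2
  have hS : ∑ x1, S x1 ≤ 2 ^ (n + r + m) * ∑ y, p2 y ^ 2 := by
    have hfourier : ∀ x1 u, walshTransform (pushforward (deorVec A x1) p2) u
        = walshTransform p2 ((∑ i, u i • A i) *ᵥ x1) := by
      intro x1 u
      rw [walshTransform_pushforward, walshTransform]
      simp only [walshChar_apply, sum_smul_mulVec_dotProduct]
      rfl
    calc ∑ x1, S x1
        = ∑ u ∈ univ.erase 0, ∑ x1, walshTransform p2 ((∑ i, u i • A i) *ᵥ x1) ^ 2 := by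
          simp only [S, hfourier]
          rw [sum_comm]
      _ ≤ ∑ _u ∈ univ.erase (0 : Fin m → ZMod 2), 2 ^ (r + n) * ∑ y, p2 y ^ 2 :=
          sum_le_sum fun u hu => by
            exact sum_walshTransform_mulVec_sq_le _ (hA u (ne_of_mem_erase hu)) p2
      _ ≤ ∑ _u : Fin m → ZMod 2, 2 ^ (r + n) * ∑ y, p2 y ^ 2 :=
          sum_le_sum_of_subset_of_nonneg (erase_subset _ _) fun _ _ _ => by positivity
      _ = 2 ^ (n + r + m) * ∑ y, p2 y ^ 2 := by
          simp only [sum_const, card_univ, Fintype.card_fun, ZMod.card, Fintype.card_fin,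
            nsmul_eq_mul]
          push_cast
          ring
  have hS0 : ∀ x1, 0 ≤ S x1 := fun x1 => sum_nonneg fun u _ => sq_nonneg _
  rw [strongDeviation_mul _ hp1]
  calc ∑ x1, p1 x1 * ∑ y, |pushforward (deorVec A x1) p2 y
        - (Fintype.card (Fin m → ZMod 2) : ℝ)⁻¹ * ∑ x2, p2 x2|
      ≤ ∑ x1, p1 x1 * √(S x1) := by
        gcongr with x1 _
        · exact hp1 x1
        simp only [Fintype.card_fun, ZMod.card, Fintype.card_fin, Nat.cast_pow, Nat.cast_ofNat]
        rw [← sum_pushforward (deorVec A x1) p2]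
        exact sum_abs_sub_mean_le _
    _ ≤ √(∑ x1, p1 x1 ^ 2) * √(∑ x1, S x1) := by
        refine (Real.sum_mul_le_sqrt_mul_sqrt _ _ _).trans_eq ?_
        simp only [Real.sq_sqrt (hS0 _)]
    _ ≤ √(∑ x1, p1 x1 ^ 2) * √(2 ^ (n + r + m) * ∑ y, p2 y ^ 2) := by gcongr
    _ = √(2 ^ (n + r + m) * (∑ x, p1 x ^ 2) * ∑ y, p2 y ^ 2) := by
        rw [← Real.sqrt_mul (sum_nonneg fun _ _ => sq_nonneg _)]
        ring_nf
def boolEquivZMod2 : Bool ≃ ZMod 2 where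
  toFun := toZ2
  invFun a := decide (a = 1)
  left_inv b := by cases b <;> rfl
  right_inv a := by fin_cases a <;> rfl

def bitsEquiv (k : ℕ) : BS k ≃ (Fin k → ZMod 2) := Equiv.piCongrRight fun _ => boolEquivZMod2

lemma toZ2_decide_eq_one (a : ZMod 2) : toZ2 (decide (a = 1)) = a :=
  boolEquivZMod2.apply_symm_apply a

lemma bitsEquiv_mulVecBool {n : ℕ} (L : Matrix (Fin n) (Fin n) (ZMod 2)) (x : BS n) :
    bitsEquiv n (mulVecBool L x) = L *ᵥ bitsEquiv n x :=
  funext fun _ => toZ2_decide_eq_one _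

lemma bitsEquiv_deor {n m : ℕ} (A : Fin m → Matrix (Fin n) (Fin n) (ZMod 2)) (x y : BS n) :
    bitsEquiv m (deor A x y) = deorVec A (bitsEquiv n x) (bitsEquiv n y) := by
  funext i
  rw [deorVec, ← bitsEquiv_mulVecBool]
  exact toZ2_decide_eq_one _

theorem strongDeviation_deor_mul_le {n m r : ℕ} (A : Fin m → Matrix (Fin n) (Fin n) (ZMod 2))
    (hA : ∀ s : BS m, s ≠ (fun _ => false) → n - r ≤ (∑ i, toZ2 (s i) • A i).rank)
    {p1 : BS n → ℝ} (hp1 : ∀ x, 0 ≤ p1 x) (p2 : BS n → ℝ) :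
    strongDeviation (deor A) (fun x1 x2 => p1 x1 * p2 x2)
      ≤ √(2 ^ (n + r + m) * (∑ x, p1 x ^ 2) * ∑ y, p2 y ^ 2) := by
  have hA' : ∀ u : Fin m → ZMod 2, u ≠ 0 → n - r ≤ (∑ i, u i • A i).rank := by
    intro u hu
    have hs : (bitsEquiv m).symm u ≠ fun _ => false := by
      intro h
      apply hu
      rw [← (bitsEquiv m).apply_symm_apply u, h]
      rfl
    rw [← (bitsEquiv m).apply_symm_apply u]
    exact hA _ hs
  rw [← strongDeviation_equiv (bitsEquiv n) (bitsEquiv n) (bitsEquiv m) (bitsEquiv_deor A)]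
  have h := strongDeviation_deorVec_mul_le A hA' (p1 := fun x => p1 ((bitsEquiv n).symm x))
    (fun x => hp1 _) (fun y => p2 ((bitsEquiv n).symm y))
  rwa [(bitsEquiv n).symm.sum_comp (p1 · ^ 2), (bitsEquiv n).symm.sum_comp (p2 · ^ 2)] at h

theorem stmt3 {n m r : ℕ} (A : Fin m → Matrix (Fin n) (Fin n) (ZMod 2))
    (hA : ∀ s : BS m, s ≠ (fun _ => false) → n - r ≤ (∑ i, toZ2 (s i) • A i).rank)
    (k1 k2 : ℝ) :
    IsStrongExtCMarkov n n m (deor A) k1 k2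
      (3 * (2:ℝ) ^ (-(k1 + k2 + 2 - (n:ℝ) - (r:ℝ) - (m:ℝ))/4)) := by
  intro C _ P hP hindep hk1 hk2
  have hε : (2:ℝ) ^ (-(k1 + k2 + 2 - ((n + r + m : ℕ) : ℝ)) / 4)
      = 2 ^ (-(k1 + k2 + 2 - (n:ℝ) - (r:ℝ) - (m:ℝ))/4) := by
    push_cast
    ring_nf
  have hdeor := isStrongExtCMarkov_of_strongDeviation_mul_le
    (fun p1 p2 hp1 => strongDeviation_deor_mul_le A hA hp1 p2) k1 k2
  refine (hdeor C P hP hindep hk1 hk2).trans ?_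
  rw [hε]
  exact le_mul_of_one_le_left (by positivity) (by norm_num)
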